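/- arXiv:2605.14183 — 2 statements merged into one kernel-verified Lean document; each statement's English description precedes it below -/
import Mathlib

section
/- Let n ≥ 1, let v₁,…,vₙ be nonzero vectors in ℂ², and let α ∈ ℂⁿ be an optimal coefficient vector with v_opt = Σⱼ αⱼ vⱼ. Then for every j = 1,…,n, the real part of the Hermitian inner product of v_opt with the j-th contribution is strictly positive: Re⟨v_opt, αⱼ vⱼ⟩ > 0. -/
/-!
Write `A = v_opt - αⱼ vⱼ`. Replacing `αⱼ` by `1` or by `-1` keeps the coefficients admissible,
so optimality gives `‖A + vⱼ‖ ≤ ‖v_opt‖` and `‖A - vⱼ‖ ≤ ‖v_opt‖`. Since `vⱼ ≠ 0`, the parallelogram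
law makes `A` strictly shorter than `v_opt`, and then Cauchy–Schwarz gives
`Re⟨v_opt, αⱼ vⱼ⟩ = Re⟨v_opt, v_opt - A⟩ ≥ ‖v_opt‖ (‖v_opt‖ - ‖A‖) > 0`.
-/

/-- Hermitian inner product on ℂ²: `⟨u,w⟩ = Σᵢ uᵢ conj(wᵢ)`. -/
noncomputable def herm (u w : Fin 2 → ℂ) : ℂ :=
  ∑ i : Fin 2, u i * (starRingEnd ℂ) (w i)

/-- Hermitian norm on ℂ²: `|u| = √⟨u,u⟩`. -/
noncomputable def cnorm2 (u : Fin 2 → ℂ) : ℝ :=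
  Real.sqrt (∑ i : Fin 2, Complex.normSq (u i))

/-- A coefficient vector is admissible if every entry has modulus at most 1. -/
def Admissible {n : ℕ} (α : Fin n → ℂ) : Prop :=
  ∀ j, ‖α j‖ ≤ 1

/-- A coefficient vector is optimal if it is admissible and maximizes the norm of the
resultant `Σⱼ αⱼ vⱼ` among all admissible coefficient vectors. -/
def IsOptimal {n : ℕ} (v : Fin n → Fin 2 → ℂ) (α : Fin n → ℂ) : Prop :=
  Admissible α ∧ ∀ β : Fin n → ℂ, Admissible β →
    cnorm2 (∑ j, β j • v j) ≤ cnorm2 (∑ j, α j • v j)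

open RCLike InnerProductSpace

section

variable {𝕜 E : Type*} [RCLike 𝕜] [NormedAddCommGroup E] [InnerProductSpace 𝕜 E]

include 𝕜 in
theorem norm_lt_of_norm_add_le_of_norm_sub_le {a b : E} {r : ℝ} (hb : b ≠ 0)
    (hadd : ‖a + b‖ ≤ r) (hsub : ‖a - b‖ ≤ r) : ‖a‖ < r := by
  have hpar := parallelogram_law_with_norm 𝕜 a b
  have hb_pos : 0 < ‖b‖ := norm_pos_iff.mpr hb
  have hr : 0 ≤ r := (norm_nonneg _).trans hadd
  nlinarith [norm_nonneg a, norm_nonneg (a + b), norm_nonneg (a - b)]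

theorem re_inner_sub_pos_of_norm_lt {a s : E} (h : ‖a‖ < ‖s‖) : 0 < re ⟪s - a, s⟫_𝕜 := by
  have hs : 0 < ‖s‖ := (norm_nonneg a).trans_lt h
  calc 0 < ‖s‖ * ‖s‖ - ‖a‖ * ‖s‖ := by nlinarith
    _ ≤ re ⟪s, s⟫_𝕜 - re ⟪a, s⟫_𝕜 := by
        rw [inner_self_eq_norm_mul_norm]; linarith [re_inner_le_norm (𝕜 := 𝕜) a s]
    _ = re ⟪s - a, s⟫_𝕜 := by rw [inner_sub_left, map_sub]

theorem sum_update_smul {ι : Type*} [Fintype ι] [DecidableEq ι] (α : ι → 𝕜) (v : ι → E)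
    (j : ι) (d : 𝕜) :
    ∑ i, Function.update α j d i • v i = ∑ i, α i • v i - α j • v j + d • v j := by
  rw [← Finset.add_sum_erase _ _ (Finset.mem_univ j), ← Finset.add_sum_erase _ _ (Finset.mem_univ j),
    Finset.sum_congr rfl fun i hi => by rw [Function.update_of_ne (Finset.ne_of_mem_erase hi)]]
  simp only [Function.update_self]
  abel

theorem re_inner_smul_sum_pos {ι : Type*} [Fintype ι] {v : ι → E} {α : ι → 𝕜} {j : ι}
    (hv : v j ≠ 0) (hα : ∀ i, ‖α i‖ ≤ 1)
    (hmax : ∀ β : ι → 𝕜, (∀ i, ‖β i‖ ≤ 1) → ‖∑ i, β i • v i‖ ≤ ‖∑ i, α i • v i‖) :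
    0 < re ⟪α j • v j, ∑ i, α i • v i⟫_𝕜 := by
  classical
  set s := ∑ i, α i • v i
  have hunit : ∀ d : 𝕜, ‖d‖ = 1 → ‖s - α j • v j + d • v j‖ ≤ ‖s‖ := fun d hd => by
    rw [← sum_update_smul]
    refine hmax _ fun i => ?_
    rcases eq_or_ne i j with rfl | hij
    · simp [hd]
    · simpa [hij] using hα i
  have hlt : ‖s - α j • v j‖ < ‖s‖ :=
    norm_lt_of_norm_add_le_of_norm_sub_le (𝕜 := 𝕜) hv (by simpa using hunit 1 norm_one)
      (by simpa [← sub_eq_add_neg] using hunit (-1) (by simp))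
  simpa using re_inner_sub_pos_of_norm_lt hlt

end

theorem herm_eq_inner (u w : Fin 2 → ℂ) :
    herm u w = ⟪(WithLp.toLp 2 w : EuclideanSpace ℂ (Fin 2)), WithLp.toLp 2 u⟫_ℂ := by
  simp [herm, PiLp.inner_apply]

theorem cnorm2_eq_norm (u : Fin 2 → ℂ) :
    cnorm2 u = ‖(WithLp.toLp 2 u : EuclideanSpace ℂ (Fin 2))‖ := by
  simp [cnorm2, EuclideanSpace.norm_eq, Complex.normSq_eq_norm_sq]

theorem toLp_sum_smul {n : ℕ} (β : Fin n → ℂ) (v : Fin n → Fin 2 → ℂ) :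
    (WithLp.toLp 2 (∑ i, β i • v i) : EuclideanSpace ℂ (Fin 2)) =
      ∑ i, β i • WithLp.toLp 2 (v i) := by
  simp [WithLp.toLp_sum]

theorem optimal_contributions_positive_general
    (n : ℕ) (v : Fin n → Fin 2 → ℂ) (hv : ∀ j, v j ≠ 0)
    (α : Fin n → ℂ) (hα : IsOptimal v α) :
    ∀ j, 0 < (herm (∑ i, α i • v i) (α j • v j)).re := by
  intro j
  rw [herm_eq_inner, toLp_sum_smul, WithLp.toLp_smul]
  refine re_inner_smul_sum_pos (v := fun i => WithLp.toLp 2 (v i)) (by simpa using hv j) hα.1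
    fun β hβ => ?_
  simpa only [cnorm2_eq_norm, toLp_sum_smul] using hα.2 β hβ

/-- For an optimal coefficient vector `α` with resultant
`v_opt = Σⱼ αⱼ vⱼ`, one has `Re⟨v_opt, αⱼ vⱼ⟩ > 0` for every `j`. -/
theorem optimal_contributions_positive
    (n : ℕ) (hn : 1 ≤ n) (v : Fin n → Fin 2 → ℂ) (hv : ∀ j, v j ≠ 0)
    (α : Fin n → ℂ) (hα : IsOptimal v α) :
    ∀ j, 0 < (herm (∑ i, α i • v i) (α j • v j)).re :=
  optimal_contributions_positive_general n v hv α hα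
end

section
/- Let n ≥ 1, let v₁,…,vₙ be nonzero vectors in ℂ², and let α ∈ ℂⁿ be an optimal coefficient vector. Then every optimal coefficient lies on the unit circle: |αⱼ| = 1 for every j = 1,…,n. -/
/-!
If `‖αⱼ‖ < 1`, set `t = 1 - ‖αⱼ‖`; both `αⱼ + t` and `αⱼ - t` are still admissible. By the
parallelogram law, moving the resultant `S` by `±t vⱼ ≠ 0` strictly increases its norm for at
least one of the two signs, contradicting optimality.
-/

open Finset

lemma norm_lt_norm_add_or_norm_lt_norm_sub (𝕜 : Type*) {E : Type*} [RCLike 𝕜] [NormedAddCommGroup E]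
    [InnerProductSpace 𝕜 E] (x : E) {y : E} (hy : y ≠ 0) :
    ‖x‖ < ‖x + y‖ ∨ ‖x‖ < ‖x - y‖ := by
  by_contra! h
  have hpar := parallelogram_law_with_norm 𝕜 x y
  have hy' : 0 < ‖y‖ := norm_pos_iff.mpr hy
  nlinarith [norm_nonneg (x + y), norm_nonneg (x - y), h.1, h.2]

lemma cnorm2_eq_norm_toLp (u : Fin 2 → ℂ) : cnorm2 u = ‖WithLp.toLp 2 u‖ := by
  simp only [cnorm2, EuclideanSpace.norm_eq, Complex.sq_norm]

lemma sum_add_single_smul {ι R M : Type*} [Fintype ι] [DecidableEq ι] [Semiring R]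
    [AddCommMonoid M] [Module R M] (α : ι → R) (v : ι → M) (j : ι) (s : R) :
    ∑ k, (α + Pi.single j s : ι → R) k • v k = ∑ k, α k • v k + s • v j := by
  simp [add_smul, sum_add_distrib, Pi.single_apply]

lemma Admissible.add_single {n : ℕ} {α : Fin n → ℂ} (hα : Admissible α) {j : Fin n} {s : ℂ}
    (hs : ‖α j‖ + ‖s‖ ≤ 1) : Admissible (α + Pi.single j s) := by
  intro k
  rcases eq_or_ne k j with rfl | hk
  · simpa using (norm_add_le _ _).trans hs
  · simpa [Pi.single_apply, hk] using hα k

lemma IsOptimal.cnorm2_add_smul_le {n : ℕ} {v : Fin n → Fin 2 → ℂ} {α : Fin n → ℂ}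
    (hα : IsOptimal v α) {j : Fin n} {s : ℂ} (hs : ‖α j‖ + ‖s‖ ≤ 1) :
    cnorm2 (∑ k, α k • v k + s • v j) ≤ cnorm2 (∑ k, α k • v k) := by
  rw [← sum_add_single_smul]
  exact hα.2 _ (hα.1.add_single hs)

theorem optimal_coefficients_unit_modulus_general
    (n : ℕ) (v : Fin n → Fin 2 → ℂ) (hv : ∀ j, v j ≠ 0)
    (α : Fin n → ℂ) (hα : IsOptimal v α) :
    ∀ j, ‖α j‖ = 1 := by
  intro j
  by_contra hj
  set t : ℝ := 1 - ‖α j‖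
  have ht : 0 < t := sub_pos.mpr ((hα.1 j).lt_of_ne hj)
  have hs : ∀ s : ℂ, ‖s‖ = t → ‖α j‖ + ‖s‖ ≤ 1 := fun s h => by rw [h]; linarith
  have hu : WithLp.toLp 2 ((t : ℂ) • v j) ≠ 0 := by
    simpa [WithLp.toLp_smul, ht.ne'] using hv j
  have hplus := hα.cnorm2_add_smul_le (hs t (by simp [ht.le]))
  have hminus := hα.cnorm2_add_smul_le (hs (-t) (by simp [ht.le]))
  rw [neg_smul, ← sub_eq_add_neg] at hminus
  simp only [cnorm2_eq_norm_toLp, WithLp.toLp_add, WithLp.toLp_sub] at hplus hminus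
  rcases norm_lt_norm_add_or_norm_lt_norm_sub ℂ (WithLp.toLp 2 (∑ k, α k • v k)) hu with h | h
  · exact h.not_ge hplus
  · exact h.not_ge hminus

/-- Every optimal coefficient lies on the unit circle: `|αⱼ| = 1`. -/
theorem optimal_coefficients_unit_modulus
    (n : ℕ) (hn : 1 ≤ n) (v : Fin n → Fin 2 → ℂ) (hv : ∀ j, v j ≠ 0)
    (α : Fin n → ℂ) (hα : IsOptimal v α) :
    ∀ j, ‖α j‖ = 1 :=
  optimal_coefficients_unit_modulus_general n v hv α hα
end
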